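/- arXiv:1802.00562 — 2 statements merged into one kernel-verified Lean document; each statement's English description precedes it below -/
import Mathlib

section
/- For every integer N ≥ 1, h = 1/N, every z ∈ [0,1] and every β ∈ {0,1,…,N}, the coefficients C̊_γ(z) satisfy the linear system Σ_{γ=0}^N C̊_γ(z) · G_1(hβ − hγ) = G_1(z − hβ). (This is the defining system of the optimal interpolation formula in W_2^{(1,0)}(0,1), whose Lagrange multiplier d(z) vanishes.) -/
/-- `G₁(x) = sgn(x)·(eˣ − e⁻ˣ)/4`, with `sgn 0 = 0`. -/
noncomputable def G1 (x : ℝ) : ℝ := Real.sign x * (Real.exp x - Real.exp (-x)) / 4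

/-- The optimal coefficients `C̊_β(z)` of the optimal interpolation formula in
`W₂^{(1,0)}(0,1)` with equally spaced nodes `x_β = βh`, `h = 1/N`. -/
noncomputable def optC1 (N : ℕ) (z : ℝ) (β : ℕ) : ℝ :=
  let h : ℝ := 1 / N
  1 / (2 * (1 - Real.exp (2 * h))) *
    (Real.sign (z - h * β - h) * (Real.exp (h * β + 2 * h - z) - Real.exp (z - h * β))
      + Real.sign (z - h * β + h) * (Real.exp (h * β - z) - Real.exp (z - h * β + 2 * h))
      + (1 + Real.exp (2 * h)) * Real.sign (z - h * β) *
          (Real.exp (z - h * β) - Real.exp (h * β - z)))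

noncomputable def Ecoef (h u : ℝ) : ℝ :=
  1 / (2 * (1 - Real.exp (2 * h))) *
    (Real.sign (u - h) * (Real.exp (2 * h - u) - Real.exp u)
      + Real.sign (u + h) * (Real.exp (-u) - Real.exp (u + 2 * h))
      + (1 + Real.exp (2 * h)) * Real.sign u * (Real.exp u - Real.exp (-u)))

lemma sA {h u : ℝ} (hu : u ≤ h) :
    Real.sign (u - h) * (Real.exp (2*h - u) - Real.exp u)
      = Real.exp u - Real.exp (2*h - u) := by
  rcases hu.lt_or_eq with h' | h'
  · rw [Real.sign_of_neg (by linarith)]; ring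
  · subst h'; rw [show 2*u - u = u by ring]; simp

lemma sA' {h u : ℝ} (hu : h ≤ u) :
    Real.sign (u - h) * (Real.exp (2*h - u) - Real.exp u)
      = Real.exp (2*h - u) - Real.exp u := by
  rcases hu.lt_or_eq with h' | h'
  · rw [Real.sign_of_pos (by linarith), one_mul]
  · subst h'; rw [show 2*h - h = h by ring]; simp

lemma sB {h u : ℝ} (hu : -h ≤ u) :
    Real.sign (u + h) * (Real.exp (-u) - Real.exp (u + 2*h))
      = Real.exp (-u) - Real.exp (u + 2*h) := by
  rcases hu.lt_or_eq with h' | h'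
  · rw [Real.sign_of_pos (by linarith), one_mul]
  · rw [← h']; rw [show -h + h = 0 by ring, show (-h) + 2*h = h by ring]; simp

lemma sB' {h u : ℝ} (hu : u ≤ -h) :
    Real.sign (u + h) * (Real.exp (-u) - Real.exp (u + 2*h))
      = Real.exp (u + 2*h) - Real.exp (-u) := by
  rcases hu.lt_or_eq with h' | h'
  · rw [Real.sign_of_neg (by linarith)]; ring
  · subst h'; rw [show -h + h = 0 by ring, show (-h) + 2*h = h by ring]; simp

lemma sC {u : ℝ} (hu : 0 ≤ u) :
    Real.sign u * (Real.exp u - Real.exp (-u)) = Real.exp u - Real.exp (-u) := by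
  rcases hu.lt_or_eq with h' | h'
  · rw [Real.sign_of_pos h', one_mul]
  · rw [← h']; simp

lemma sC' {u : ℝ} (hu : u ≤ 0) :
    Real.sign u * (Real.exp u - Real.exp (-u)) = Real.exp (-u) - Real.exp u := by
  rcases hu.lt_or_eq with h' | h'
  · rw [Real.sign_of_neg h']; ring
  · subst h'; simp

lemma exp_facts {h : ℝ} (hh : 0 < h) :
    1 < Real.exp h ∧ (1:ℝ) - Real.exp h * Real.exp h ≠ 0 ∧
      Real.exp h - (Real.exp h)⁻¹ ≠ 0 := by
  have h1 : 1 < Real.exp h := by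
    have := Real.exp_lt_exp.mpr hh; rwa [Real.exp_zero] at this
  have hp := Real.exp_pos h
  refine ⟨h1, by nlinarith, ?_⟩
  have : (Real.exp h)⁻¹ < 1 := by
    rw [inv_lt_one_iff₀]; right; exact h1
  exact ne_of_gt (by linarith)

lemma Ecoef_right {h u : ℝ} (hh : 0 < h) (hu : h ≤ u) : Ecoef h u = 0 := by
  unfold Ecoef
  rw [sA' hu, sB (by linarith), mul_assoc, sC (by linarith)]
  apply mul_eq_zero_of_right
  simp only [show (2:ℝ)*h = h + h from by ring, Real.exp_sub, Real.exp_add, Real.exp_neg]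
  field_simp
  ring

lemma Ecoef_left {h u : ℝ} (hh : 0 < h) (hu : u ≤ -h) : Ecoef h u = 0 := by
  unfold Ecoef
  rw [sA (by linarith), sB' hu, mul_assoc, sC' (by linarith)]
  apply mul_eq_zero_of_right
  simp only [show (2:ℝ)*h = h + h from by ring, Real.exp_sub, Real.exp_add, Real.exp_neg]
  field_simp
  ring

lemma Ecoef_mid1 {h u : ℝ} (hh : 0 < h) (hu0 : 0 ≤ u) (hu1 : u ≤ h) :
    Ecoef h u = (Real.exp (h - u) - Real.exp (u - h)) / (Real.exp h - Real.exp (-h)) := by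
  have h2 : 1 < Real.exp (2*h) := by
    have := Real.exp_lt_exp.mpr (show (0:ℝ) < 2*h by linarith); rwa [Real.exp_zero] at this
  have hA2 : (2:ℝ) * (1 - Real.exp (2*h)) ≠ 0 :=
    mul_ne_zero two_ne_zero (ne_of_lt (by linarith))
  have hD : Real.exp h - Real.exp (-h) ≠ 0 := by
    have := Real.exp_lt_exp.mpr (show -h < h by linarith)
    exact ne_of_gt (by linarith)
  unfold Ecoef
  rw [sA hu1, sB (by linarith), mul_assoc, sC hu0,
    eq_div_iff hD, one_div, inv_mul_eq_div, div_mul_eq_mul_div, div_eq_iff hA2]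
  simp only [show (2:ℝ)*h = h + h from by ring, Real.exp_sub, Real.exp_add, Real.exp_neg]
  field_simp
  ring

lemma Ecoef_mid2 {h u : ℝ} (hh : 0 < h) (hu0 : -h ≤ u) (hu1 : u ≤ 0) :
    Ecoef h u = (Real.exp (h + u) - Real.exp (-h - u)) / (Real.exp h - Real.exp (-h)) := by
  have h2 : 1 < Real.exp (2*h) := by
    have := Real.exp_lt_exp.mpr (show (0:ℝ) < 2*h by linarith); rwa [Real.exp_zero] at this
  have hA2 : (2:ℝ) * (1 - Real.exp (2*h)) ≠ 0 :=
    mul_ne_zero two_ne_zero (ne_of_lt (by linarith))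
  have hD : Real.exp h - Real.exp (-h) ≠ 0 := by
    have := Real.exp_lt_exp.mpr (show -h < h by linarith)
    exact ne_of_gt (by linarith)
  unfold Ecoef
  rw [sA (by linarith), sB hu0, mul_assoc, sC' hu1,
    eq_div_iff hD, one_div, inv_mul_eq_div, div_mul_eq_mul_div, div_eq_iff hA2]
  simp only [show (2:ℝ)*h = h + h from by ring, Real.exp_sub, Real.exp_add, Real.exp_neg]
  field_simp
  ring


lemma optC1_eq_Ecoef (N : ℕ) (z : ℝ) (γ : ℕ) :
    optC1 N z γ = Ecoef (1/N) (z - 1/(N:ℝ) * γ) := by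
  simp only [optC1, Ecoef]; ring_nf

lemma G1_of_nonneg {x : ℝ} (hx : 0 ≤ x) :
    G1 x = (Real.exp x - Real.exp (-x)) / 4 := by
  unfold G1
  rcases hx.lt_or_eq with h' | h'
  · rw [Real.sign_of_pos h', one_mul]
  · rw [← h']; simp

lemma G1_of_nonpos {x : ℝ} (hx : x ≤ 0) :
    G1 x = (Real.exp (-x) - Real.exp x) / 4 := by
  unfold G1
  rcases hx.lt_or_eq with h' | h'
  · rw [Real.sign_of_neg h']; ring
  · rw [h']; simp

lemma key1 (h p q : ℝ) (hD : Real.exp h - Real.exp (-h) ≠ 0) :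
    (Real.exp (h - p) - Real.exp (p - h)) / (Real.exp h - Real.exp (-h)) *
        ((Real.exp (-q) - Real.exp q) / 4)
      + (Real.exp (h + (p - h)) - Real.exp (-h - (p - h))) / (Real.exp h - Real.exp (-h)) *
        ((Real.exp (-(q - h)) - Real.exp (q - h)) / 4)
      = (Real.exp (p - q) - Real.exp (-(p - q))) / 4 := by
  field_simp [hD]
  simp only [Real.exp_sub, Real.exp_add, Real.exp_neg]
  field_simp
  ring

lemma key2 (h p q : ℝ) (hD : Real.exp h - Real.exp (-h) ≠ 0) :
    (Real.exp (h - p) - Real.exp (p - h)) / (Real.exp h - Real.exp (-h)) *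
        ((Real.exp q - Real.exp (-q)) / 4)
      + (Real.exp (h + (p - h)) - Real.exp (-h - (p - h))) / (Real.exp h - Real.exp (-h)) *
        ((Real.exp (q - h) - Real.exp (-(q - h))) / 4)
      = (Real.exp (-(p - q)) - Real.exp (p - q)) / 4 := by
  field_simp [hD]
  simp only [Real.exp_sub, Real.exp_add, Real.exp_neg]
  field_simp
  ring

/-- For every `N ≥ 1`, `h = 1/N`, every `z ∈ [0,1]` and every `β ∈ {0,…,N}`, the optimal
coefficients satisfy the linear system
`Σ_{γ=0}^N C̊_γ(z)·G₁(hβ − hγ) = G₁(z − hβ)`. -/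
theorem optimal_coeffs_solve_system_m1 (N : ℕ) (hN : 1 ≤ N) (z : ℝ)
    (hz : z ∈ Set.Icc (0 : ℝ) 1) (β : ℕ) (hβ : β ≤ N) :
    ∑ γ ∈ Finset.range (N + 1),
        optC1 N z γ * G1 ((1 / N : ℝ) * β - (1 / N : ℝ) * γ)
      = G1 (z - (1 / N : ℝ) * β) := by
  obtain ⟨hz0, hz1⟩ := hz
  have hN' : (1:ℝ) ≤ (N:ℝ) := by exact_mod_cast hN
  have hNpos : (0:ℝ) < N := by linarith
  obtain ⟨h, hdef⟩ : ∃ h : ℝ, h = 1 / (N:ℝ) := ⟨_, rfl⟩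
  rw [← hdef]
  have hh : 0 < h := by rw [hdef]; positivity
  have hNh : h * N = 1 := by rw [hdef]; field_simp
  -- choose the interval index α
  obtain ⟨α, hαN, hα1, hα2⟩ :
      ∃ α : ℕ, α + 1 ≤ N ∧ h * α ≤ z ∧ z ≤ h * α + h := by
    have hm1 : (⌊z * N⌋₊ : ℝ) ≤ z * N := Nat.floor_le (by positivity)
    have hm2 : z * N < ⌊z * N⌋₊ + 1 := Nat.lt_floor_add_one _
    by_cases hc : ⌊z * N⌋₊ ≤ N - 1
    · refine ⟨⌊z * N⌋₊, by omega, ?_, ?_⟩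
      · nlinarith
      · nlinarith
    · have hNm : (N:ℝ) ≤ (⌊z * N⌋₊ : ℝ) := by exact_mod_cast (by omega : N ≤ ⌊z * N⌋₊)
      have hz1' : z = 1 := le_antisymm hz1 (by nlinarith)
      refine ⟨N - 1, by omega, ?_, ?_⟩
      · have : ((N - 1 : ℕ) : ℝ) = (N:ℝ) - 1 := by
          push_cast [Nat.cast_sub hN]; ring
        rw [this, hz1']; nlinarith
      · have : ((N - 1 : ℕ) : ℝ) = (N:ℝ) - 1 := by
          push_cast [Nat.cast_sub hN]; ring
        rw [this, hz1']; nlinarith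
  have hαR : (α:ℝ) + 1 ≤ (N:ℝ) := by exact_mod_cast hαN
  -- reduce the sum to two terms
  have hsub : ({α, α + 1} : Finset ℕ) ⊆ Finset.range (N + 1) := by
    intro x hx
    simp only [Finset.mem_insert, Finset.mem_singleton] at hx
    rcases hx with rfl | rfl <;> simp only [Finset.mem_range] <;> omega
  rw [← Finset.sum_subset hsub (by
    intro x hx1 hx2
    simp only [Finset.mem_insert, Finset.mem_singleton, not_or] at hx2
    simp only [Finset.mem_range] at hx1
    apply mul_eq_zero_of_left
    rw [optC1_eq_Ecoef, ← hdef]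
    rcases (by omega : x + 1 ≤ α ∨ α + 2 ≤ x) with hcase | hcase
    · have hx' : (x:ℝ) + 1 ≤ (α:ℝ) := by exact_mod_cast hcase
      have hA : h * ((x:ℝ) + 1) ≤ h * (α:ℝ) := mul_le_mul_of_nonneg_left hx' hh.le
      have he : h * ((x:ℝ) + 1) = h * (x:ℝ) + h := by ring
      apply Ecoef_right hh
      linarith
    · have hx' : (α:ℝ) + 2 ≤ (x:ℝ) := by exact_mod_cast hcase
      have hA : h * ((α:ℝ) + 2) ≤ h * (x:ℝ) := mul_le_mul_of_nonneg_left hx' hh.le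
      have he : h * ((α:ℝ) + 2) = h * (α:ℝ) + h + h := by ring
      apply Ecoef_left hh
      linarith)]
  rw [Finset.sum_insert (by simp), Finset.sum_singleton]
  simp only [optC1_eq_Ecoef, ← hdef, Nat.cast_add, Nat.cast_one]
  have he : h * ((α:ℝ) + 1) = h * (α:ℝ) + h := by ring
  rw [Ecoef_mid1 hh (by linarith) (by linarith),
    Ecoef_mid2 hh (by linarith) (by linarith)]
  have hD : Real.exp h - Real.exp (-h) ≠ 0 := by
    have := Real.exp_lt_exp.mpr (show -h < h by linarith)
    exact ne_of_gt (by linarith)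
  rcases (by omega : β ≤ α ∨ α + 1 ≤ β) with hcase | hcase
  · have hb : (β:ℝ) ≤ (α:ℝ) := by exact_mod_cast hcase
    have hA : h * (β:ℝ) ≤ h * (α:ℝ) := mul_le_mul_of_nonneg_left hb hh.le
    rw [G1_of_nonpos (show h * β - h * α ≤ 0 by linarith),
      G1_of_nonpos (show h * β - h * ((α:ℝ) + 1) ≤ 0 by linarith),
      G1_of_nonneg (show 0 ≤ z - h * β by linarith)]
    rw [show z - h * ((α:ℝ) + 1) = (z - h * (α:ℝ)) - h by ring,
      show h * (β:ℝ) - h * ((α:ℝ) + 1) = (h * (β:ℝ) - h * (α:ℝ)) - h by ring,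
      show z - h * (β:ℝ) = (z - h * (α:ℝ)) - (h * (β:ℝ) - h * (α:ℝ)) by ring,
      show z - h * (α:ℝ) - h = (z - h * (α:ℝ)) - h by ring]
    exact key1 h _ _ hD
  · have hb : (α:ℝ) + 1 ≤ (β:ℝ) := by exact_mod_cast hcase
    have hB : h * ((α:ℝ) + 1) ≤ h * (β:ℝ) := mul_le_mul_of_nonneg_left hb hh.le
    rw [G1_of_nonneg (show 0 ≤ h * β - h * α by linarith),
      G1_of_nonneg (show 0 ≤ h * β - h * ((α:ℝ) + 1) by linarith),
      G1_of_nonpos (show z - h * β ≤ 0 by linarith)]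
    rw [show z - h * ((α:ℝ) + 1) = (z - h * (α:ℝ)) - h by ring,
      show h * (β:ℝ) - h * ((α:ℝ) + 1) = (h * (β:ℝ) - h * (α:ℝ)) - h by ring,
      show z - h * (β:ℝ) = (z - h * (α:ℝ)) - (h * (β:ℝ) - h * (α:ℝ)) by ring,
      show z - h * (α:ℝ) - h = (z - h * (α:ℝ)) - h by ring]
    exact key2 h _ _ hD
end

section
/- For every h > 0 and every integer β, the discrete analogue D_1 of the operator d²/dx² − 1 inverts G_1 on the lattice: (2/(1−e^{2h})) · [ (1+e^{2h})·G_1(hβ) − e^h·G_1(h(β−1)) − e^h·G_1(h(β+1)) ] = δ_d(β), where δ_d(β) = 1 if β = 0 and δ_d(β) = 0 otherwise. -/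
/-!
Since `G₁(x) = sinh |x| / 2`, the addition formula `sinh (a - h) + sinh (a + h) = 2 cosh h sinh a`
says that `G₁` is annihilated by the symmetric second difference `2 cosh h · f(x) − f(x − h) − f(x + h)`
away from the kink at `0`, and the operator in the theorem is `eʰ` times that difference.
At `x = 0` the difference is `−sinh h`, and the prefactor `2 / (1 − e^{2h})` normalises
`−eʰ sinh h = (1 − e^{2h}) / 2` to `1`.
-/

open Real

lemma G1_eq_sinh_abs (x : ℝ) : G1 x = sinh |x| / 2 := by
  rcases lt_trichotomy x 0 with hx | rfl | hx
  · rw [G1, Real.sign_of_neg hx, abs_of_neg hx, sinh_eq, neg_neg]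
    ring
  · simp [G1]
  · rw [G1, Real.sign_of_pos hx, abs_of_pos hx, sinh_eq]
    ring

lemma sinh_sub_add_sinh_add (a h : ℝ) : sinh (a - h) + sinh (a + h) = 2 * cosh h * sinh a := by
  rw [sinh_sub, sinh_add]
  ring

lemma G1_sub_add_G1_add {x h : ℝ} (hx : |h| ≤ |x|) :
    G1 (x - h) + G1 (x + h) = 2 * cosh h * G1 x := by
  simp only [G1_eq_sinh_abs]
  rcases le_or_gt 0 x with hx₀ | hx₀
  · rw [abs_of_nonneg hx₀] at hx ⊢
    rw [abs_of_nonneg (by linarith [le_abs_self h]), abs_of_nonneg (by linarith [neg_abs_le h])]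
    linear_combination sinh_sub_add_sinh_add x h / 2
  · rw [abs_of_neg hx₀] at hx ⊢
    rw [abs_of_nonpos (by linarith [neg_abs_le h]), abs_of_nonpos (by linarith [le_abs_self h]),
      show -(x - h) = -x + h by ring, show -(x + h) = -x - h by ring]
    linear_combination sinh_sub_add_sinh_add (-x) h / 2

lemma G1_neg_add_G1 (h : ℝ) : G1 (-h) + G1 h = sinh |h| := by
  rw [G1_eq_sinh_abs, G1_eq_sinh_abs, abs_neg]
  ring

lemma exp_second_difference (f : ℝ → ℝ) (x h : ℝ) :
    (1 + exp (2 * h)) * f x - exp h * f (x - h) - exp h * f (x + h)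
      = exp h * (2 * cosh h * f x - (f (x - h) + f (x + h))) := by
  rw [cosh_eq, two_mul, exp_add, exp_neg]
  field_simp
  ring

/-- For every `h > 0` and every integer `β`, the discrete analogue `D₁` of the operator
`d²/dx² − 1` inverts `G₁` on the lattice:
`(2/(1−e^{2h}))·[(1+e^{2h})·G₁(hβ) − e^h·G₁(h(β−1)) − e^h·G₁(h(β+1))] = δ_d(β)`. -/
theorem discrete_analogue_inverts_G1 (h : ℝ) (hh : 0 < h) (β : ℤ) :
    2 / (1 - Real.exp (2 * h)) *
        ((1 + Real.exp (2 * h)) * G1 (h * (β : ℝ))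
          - Real.exp h * G1 (h * ((β : ℝ) - 1))
          - Real.exp h * G1 (h * ((β : ℝ) + 1)))
      = if β = 0 then 1 else 0 := by
  rw [show h * ((β : ℝ) - 1) = h * β - h by ring, show h * ((β : ℝ) + 1) = h * β + h by ring,
    exp_second_difference G1]
  split_ifs with hβ
  · subst hβ
    have hexp : 1 - exp (2 * h) ≠ 0 := sub_ne_zero.2 (one_lt_exp_iff.2 (by linarith)).ne
    rw [Int.cast_zero, mul_zero, zero_sub, zero_add, G1_neg_add_G1, abs_of_pos hh, G1_eq_sinh_abs 0,
      abs_zero, sinh_zero, div_mul_eq_mul_div, div_eq_one_iff_eq hexp, sinh_eq, two_mul h, exp_add,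
      exp_neg]
    field_simp
    ring
  · have hx : |h| ≤ |h * β| := by
      rw [abs_mul]
      exact le_mul_of_one_le_right (abs_nonneg h) (by exact_mod_cast Int.one_le_abs hβ)
    rw [G1_sub_add_G1_add hx, sub_self, mul_zero, mul_zero]
end
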